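/- arXiv:0908.4531 — 6 statements merged into one kernel-verified Lean document; each statement's English description precedes it below -/
import Mathlib

section
/- Let E be a real inner product space, let u ∈ E be nonzero, and let r : E → E be the reflection across the wall u^⊥, i.e. r(x) = x − 2(⟨x,u⟩/⟨u,u⟩)u. Let P ⊆ E be a set invariant under r (r(P) ⊆ P), let v ∈ P, and let n ∈ E satisfy ⟨n,w⟩ ≤ ⟨n,v⟩ for all w ∈ P (i.e. n lies in the normal cone of P at v). Then the wall u^⊥ does not strictly separate any two of the three vectors v, n, v+n; concretely, ⟨u,v⟩·⟨u,n⟩ ≥ 0, ⟨u,v⟩·⟨u,v+n⟩ ≥ 0, and ⟨u,n⟩·⟨u,v+n⟩ ≥ 0. -/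
open RealInnerProductSpace

/-- **Lemma (no wall separates face vector, normal vector, and their sum).**
If `P` is invariant under the reflection `r` across the wall `u^⊥`, `v ∈ P`,
and `n` lies in the normal cone of `P` at `v`, then the wall `u^⊥` does not
strictly separate any two of `v`, `n`, `v + n`. -/
theorem zonotope_wall_not_separating
    {E : Type*} [NormedAddCommGroup E] [InnerProductSpace ℝ E]
    (u : E) (hu : u ≠ 0) (P : Set E)
    (hP : ∀ x ∈ P, x - (2 * ⟪x, u⟫ / ⟪u, u⟫) • u ∈ P)
    (v : E) (hv : v ∈ P) (n : E) (hn : ∀ w ∈ P, ⟪n, w⟫ ≤ ⟪n, v⟫) :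
    0 ≤ ⟪u, v⟫ * ⟪u, n⟫ ∧ 0 ≤ ⟪u, v⟫ * ⟪u, v + n⟫ ∧ 0 ≤ ⟪u, n⟫ * ⟪u, v + n⟫ := by
  have hnorm : ‖u‖ ≠ 0 := norm_ne_zero_iff.mpr hu
  have huu : (0:ℝ) < ⟪u, u⟫ := by
    rw [real_inner_self_eq_norm_sq]; positivity
  have h1 := hn _ (hP v hv)
  rw [inner_sub_right, real_inner_smul_right] at h1
  have h2 : 0 ≤ 2 * ⟪v, u⟫ / ⟪u, u⟫ * ⟪n, u⟫ := by linarith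
  rw [div_mul_eq_mul_div, le_div_iff₀ huu] at h2
  have key : 0 ≤ ⟪u, v⟫ * ⟪u, n⟫ := by
    rw [real_inner_comm v u, real_inner_comm n u]
    nlinarith
  refine ⟨key, ?_, ?_⟩ <;> rw [inner_add_right] <;>
    nlinarith [sq_nonneg ⟪u, v⟫, sq_nonneg ⟪u, n⟫]
end

section
/- Let B be a finite subset of a real inner product space E and let n ∈ E. Set B_n := {b ∈ B : ⟨n,b⟩ = 0} and w := ∑_{b ∈ B, ⟨n,b⟩ > 0} b. Then the set of points of the zonotope Z(B) at which the linear functional ⟨n,·⟩ attains its maximum over Z(B) is exactly the translate w + Z(B_n); that is, {z ∈ Z(B) : ∀ y ∈ Z(B), ⟨n,y⟩ ≤ ⟨n,z⟩} = w + Z(B_n). -/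
open RealInnerProductSpace
open scoped Classical

/-- The zonotope spanned by a finite set `B`. -/
def zonotope {E : Type*} [NormedAddCommGroup E] [InnerProductSpace ℝ E]
    (B : Finset E) : Set E :=
  {z | ∃ c : E → ℝ, (∀ b ∈ B, 0 ≤ c b ∧ c b ≤ 1) ∧ z = ∑ b ∈ B, c b • b}

/-- **Lemma (faces of a zonotope are translated zonotopes).** The set of
points of `Z(B)` on which the linear functional `⟪n, ·⟫` attains its maximum
over `Z(B)` is exactly the translate `w + Z(B_n)`, where
`B_n = {b ∈ B : ⟪n, b⟫ = 0}` and `w = ∑_{b ∈ B, ⟪n, b⟫ > 0} b`. -/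
theorem zonotope_face_eq_translate
    {E : Type*} [NormedAddCommGroup E] [InnerProductSpace ℝ E]
    (B : Finset E) (n : E) :
    {z ∈ zonotope B | ∀ y ∈ zonotope B, ⟪n, y⟫ ≤ ⟪n, z⟫} =
      (fun x => (∑ b ∈ B.filter (fun b => 0 < ⟪n, b⟫), b) + x) ''
        zonotope (B.filter (fun b => ⟪n, b⟫ = 0)) := by
  classical
  set P := B.filter (fun b => 0 < ⟪n, b⟫) with hP
  set Z := B.filter (fun b => ⟪n, b⟫ = 0) with hZ
  set w : E := ∑ b ∈ P, b with hw
  -- w written as a zonotope combination over B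
  have hw_eq : w = ∑ b ∈ B, (if 0 < ⟪n, b⟫ then (1:ℝ) else 0) • b := by
    rw [hw, hP, Finset.sum_filter]
    refine Finset.sum_congr rfl fun b _ => ?_
    by_cases h : 0 < ⟪n, b⟫ <;> simp [h]
  have hwZ : w ∈ zonotope B := by
    refine ⟨fun b => if 0 < ⟪n, b⟫ then (1:ℝ) else 0, fun b _ => ?_, hw_eq⟩
    by_cases h : 0 < ⟪n, b⟫ <;> simp [h]
  -- inner product of n with w
  have hMval : ⟪n, w⟫ = ∑ b ∈ B, max ⟪n, b⟫ 0 := by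
    rw [hw, inner_sum, hP, Finset.sum_filter]
    refine Finset.sum_congr rfl fun b _ => ?_
    by_cases h : 0 < ⟪n, b⟫
    · simp [h, max_eq_left h.le]
    · simp [h, max_eq_right (not_lt.mp h)]
  -- termwise bound
  have hterm : ∀ (c : E → ℝ) (b : E), 0 ≤ c b → c b ≤ 1 →
      c b * ⟪n, b⟫ ≤ max ⟪n, b⟫ 0 := by
    intro c b h0 h1
    rcases le_or_gt 0 ⟪n, b⟫ with h | h
    · calc c b * ⟪n, b⟫ ≤ 1 * ⟪n, b⟫ := mul_le_mul_of_nonneg_right h1 h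
        _ = ⟪n, b⟫ := one_mul _
        _ ≤ max ⟪n, b⟫ 0 := le_max_left _ _
    · calc c b * ⟪n, b⟫ ≤ 0 := mul_nonpos_of_nonneg_of_nonpos h0 h.le
        _ ≤ max ⟪n, b⟫ 0 := le_max_right _ _
  -- upper bound over the zonotope
  have hub : ∀ y ∈ zonotope B, ⟪n, y⟫ ≤ ⟪n, w⟫ := by
    rintro y ⟨c, hc, rfl⟩
    rw [hMval, inner_sum]
    refine Finset.sum_le_sum fun b hb => ?_
    rw [real_inner_smul_right]
    exact hterm c b (hc b hb).1 (hc b hb).2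
  ext z
  simp only [Set.mem_setOf_eq, Set.mem_image]
  constructor
  · rintro ⟨⟨c, hc, rfl⟩, hmax⟩
    -- maximality forces termwise equality
    have hge : ⟪n, w⟫ ≤ ⟪n, ∑ b ∈ B, c b • b⟫ := hmax w hwZ
    have hsum_eq : ∑ b ∈ B, c b * ⟪n, b⟫ = ∑ b ∈ B, max ⟪n, b⟫ 0 := by
      have hle : ⟪n, ∑ b ∈ B, c b • b⟫ ≤ ⟪n, w⟫ := hub _ ⟨c, hc, rfl⟩
      have := le_antisymm hle hge
      rw [hMval] at this
      rw [← this, inner_sum]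
      simp [real_inner_smul_right]
    have heach : ∀ b ∈ B, c b * ⟪n, b⟫ = max ⟪n, b⟫ 0 := by
      intro b hb
      refine (Finset.sum_eq_sum_iff_of_le fun i hi =>
        hterm c i (hc i hi).1 (hc i hi).2).mp hsum_eq b hb
    refine ⟨∑ b ∈ Z, c b • b, ⟨c, fun b hb => hc b (Finset.mem_filter.mp hb).1, rfl⟩, ?_⟩
    rw [hw_eq, hZ, Finset.sum_filter, ← Finset.sum_add_distrib]
    refine (Finset.sum_congr rfl fun b hb => ?_).symm
    rcases lt_trichotomy ⟪n, b⟫ 0 with h | h | h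
    · have hcb : c b * ⟪n, b⟫ = 0 := by
        rw [heach b hb, max_eq_right h.le]
      have : c b = 0 := by
        rcases mul_eq_zero.mp hcb with h' | h'
        · exact h'
        · exact absurd h' h.ne
      simp [this, h.not_gt, h.ne]
    · simp [h]
    · have hcb : c b * ⟪n, b⟫ = ⟪n, b⟫ := by
        rw [heach b hb, max_eq_left h.le]
      have : c b = 1 := by
        have := mul_right_cancel₀ h.ne' (hcb.trans (one_mul _).symm)
        exact this
      simp [this, h, h.ne']
  · rintro ⟨x, ⟨d, hd, rfl⟩, rfl⟩
    have hx0 : ⟪n, ∑ b ∈ Z, d b • b⟫ = 0 := by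
      rw [inner_sum]
      refine Finset.sum_eq_zero fun b hb => ?_
      have : ⟪n, b⟫ = 0 := (Finset.mem_filter.mp hb).2
      rw [real_inner_smul_right, this, mul_zero]
    constructor
    · refine ⟨fun b => if 0 < ⟪n, b⟫ then (1:ℝ) else if ⟪n, b⟫ = 0 then d b else 0,
        fun b hb => ?_, ?_⟩
      · by_cases h1 : 0 < ⟪n, b⟫
        · simp [h1]
        · by_cases h2 : ⟪n, b⟫ = 0
          · simpa [h1, h2] using hd b (Finset.mem_filter.mpr ⟨hb, h2⟩)
          · simp [h1, h2]
      · rw [hw_eq, hZ, Finset.sum_filter, ← Finset.sum_add_distrib]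
        refine Finset.sum_congr rfl fun b hb => ?_
        rcases lt_trichotomy ⟪n, b⟫ 0 with h | h | h
        · simp [h.not_gt, h.ne]
        · simp [h]
        · simp [h, h.ne']
    · intro y hy
      calc ⟪n, y⟫ ≤ ⟪n, w⟫ := hub y hy
        _ = ⟪n, w + ∑ b ∈ Z, d b • b⟫ := by rw [inner_add_right, hx0, add_zero]
end

section
/- Let B be a finite subset of a real inner product space E, let p ∈ E, and let q ∈ Z(B) be a closest point of the zonotope Z(B) to p, i.e. ‖p − q‖ ≤ ‖p − y‖ for all y ∈ Z(B). Set n := p − q, B_n := {b ∈ B : ⟨n,b⟩ = 0}, and w := ∑_{b ∈ B, ⟨n,b⟩ > 0} b. Then ⟨n,y⟩ ≤ ⟨n,q⟩ for all y ∈ Z(B), and q lies in the face w + Z(B_n) of Z(B); in particular the closest point q lies in the maximal face of Z(B) orthogonal to n. -/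
open RealInnerProductSpace
open scoped Classical

lemma zonotope_convex {E : Type*} [NormedAddCommGroup E] [InnerProductSpace ℝ E]
    (B : Finset E) : Convex ℝ (zonotope B) := by
  rintro x ⟨c, hc, rfl⟩ y ⟨d, hd, rfl⟩ a b ha hb hab
  refine ⟨fun e => a * c e + b * d e, fun e he => ?_, ?_⟩
  · refine ⟨add_nonneg (mul_nonneg ha (hc e he).1) (mul_nonneg hb (hd e he).1), ?_⟩
    calc a * c e + b * d e ≤ a * 1 + b * 1 := by
            gcongr <;> [exact (hc e he).2; exact (hd e he).2]
      _ = 1 := by linarith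
  · rw [Finset.smul_sum, Finset.smul_sum, ← Finset.sum_add_distrib]
    exact Finset.sum_congr rfl fun e _ => by rw [smul_smul, smul_smul, add_smul]

/-- **Lemma.** If `q` is a closest point of the zonotope `Z(B)` to `p` and
`n = p - q`, then `⟪n, ·⟫` is maximal over `Z(B)` at `q`, and `q` lies in the
maximal face `w + Z(B_n)` of `Z(B)` orthogonal to `n`, where
`B_n = {b ∈ B : ⟪n, b⟫ = 0}` and `w = ∑_{b ∈ B, ⟪n, b⟫ > 0} b`. -/
theorem zonotope_proj_mem_face
    {E : Type*} [NormedAddCommGroup E] [InnerProductSpace ℝ E]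
    (B : Finset E) (p q : E) (hq : q ∈ zonotope B)
    (hclosest : ∀ y ∈ zonotope B, ‖p - q‖ ≤ ‖p - y‖) :
    (∀ y ∈ zonotope B, ⟪p - q, y⟫ ≤ ⟪p - q, q⟫) ∧
      q ∈ (fun x => (∑ b ∈ B.filter (fun b => 0 < ⟪p - q, b⟫), b) + x) ''
        zonotope (B.filter (fun b => ⟪p - q, b⟫ = 0)) := by
  set n := p - q with hn
  -- part 1
  have hmin : ‖p - q‖ = ⨅ w : zonotope B, ‖p - w‖ := by
    haveI : Nonempty (zonotope B) := ⟨⟨q, hq⟩⟩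
    refine le_antisymm (le_ciInf fun w => hclosest w w.2) ?_
    have hbdd : BddBelow (Set.range fun w : zonotope B => ‖p - (w : E)‖) :=
      ⟨0, by rintro x ⟨w, rfl⟩; exact norm_nonneg _⟩
    exact ciInf_le hbdd ⟨q, hq⟩
  have h1 : ∀ y ∈ zonotope B, ⟪n, y⟫ ≤ ⟪n, q⟫ := by
    intro y hy
    have := (norm_eq_iInf_iff_real_inner_le_zero (zonotope_convex B) hq).1 hmin y hy
    rw [inner_sub_right] at this
    linarith
  refine ⟨h1, ?_⟩
  obtain ⟨c, hc, hqe⟩ := hq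
  -- the extremal point w is in the zonotope
  have hwmem : (∑ b ∈ B.filter (fun b => 0 < ⟪n, b⟫), b) ∈ zonotope B := by
    refine ⟨fun b => if 0 < ⟪n, b⟫ then 1 else 0, fun b _ => ?_, ?_⟩
    · dsimp only; split <;> norm_num
    · rw [Finset.sum_filter]
      refine Finset.sum_congr rfl fun b _ => ?_
      by_cases h : 0 < ⟪n, b⟫ <;> simp [h]
  -- termwise equality
  have key : ∀ b ∈ B, c b * ⟪n, b⟫ = max ⟪n, b⟫ 0 := by
    have hle : ∀ b ∈ B, c b * ⟪n, b⟫ ≤ max ⟪n, b⟫ 0 := by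
      intro b hb
      rcases le_or_gt ⟪n, b⟫ 0 with h | h
      · calc c b * ⟪n, b⟫ ≤ 0 := mul_nonpos_of_nonneg_of_nonpos (hc b hb).1 h
          _ ≤ max ⟪n, b⟫ 0 := le_max_right _ _
      · calc c b * ⟪n, b⟫ ≤ 1 * ⟪n, b⟫ := by nlinarith [(hc b hb).2]
          _ = ⟪n, b⟫ := one_mul _
          _ ≤ max ⟪n, b⟫ 0 := le_max_left _ _
    have hsum : ∑ b ∈ B, max ⟪n, b⟫ 0 ≤ ∑ b ∈ B, c b * ⟪n, b⟫ := by
      have hw := h1 _ hwmem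
      have e1 : ⟪n, (∑ b ∈ B.filter (fun b => 0 < ⟪n, b⟫), b)⟫ = ∑ b ∈ B, max ⟪n, b⟫ 0 := by
        rw [inner_sum, Finset.sum_filter]
        refine Finset.sum_congr rfl fun b _ => ?_
        rcases lt_or_ge 0 ⟪n, b⟫ with h | h
        · rw [if_pos h, max_eq_left h.le]
        · rw [if_neg (not_lt.2 h), max_eq_right h]
      have e2 : ⟪n, q⟫ = ∑ b ∈ B, c b * ⟪n, b⟫ := by
        rw [hqe, inner_sum]
        exact Finset.sum_congr rfl fun b _ => real_inner_smul_right _ _ _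
      rw [e1, e2] at hw; exact hw
    intro b hb
    exact (Finset.sum_eq_sum_iff_of_le hle).1 (le_antisymm (Finset.sum_le_sum hle) hsum) b hb
  -- conclude
  refine ⟨∑ b ∈ B.filter (fun b => ⟪n, b⟫ = 0), c b • b, ⟨c, fun b hb => hc b (Finset.mem_filter.1 hb).1, rfl⟩, ?_⟩
  show (∑ b ∈ B.filter (fun b => 0 < ⟪n, b⟫), b) + (∑ b ∈ B.filter (fun b => ⟪n, b⟫ = 0), c b • b) = q
  rw [hqe, Finset.sum_filter, Finset.sum_filter, ← Finset.sum_add_distrib]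
  refine Finset.sum_congr rfl fun b hb => ?_
  have hk := key b hb
  rcases lt_trichotomy ⟪n, b⟫ 0 with h | h | h
  · have hc0 : c b = 0 := by
      have : c b * ⟪n, b⟫ = 0 := by rw [hk, max_eq_right h.le]
      exact (mul_eq_zero.1 this).resolve_right h.ne
    simp [if_neg (not_lt.2 h.le), if_neg h.ne, hc0]
  · simp [h, if_pos h]
  · have hc1 : c b = 1 := by
      have : c b * ⟪n, b⟫ = 1 * ⟪n, b⟫ := by rw [hk, max_eq_left h.le, one_mul]
      exact mul_right_cancel₀ h.ne' this
    simp [if_pos h, if_neg h.ne', hc1]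
end

section
/- Let E be a real inner product space, let S ⊆ E be a nonempty finite affinely independent set (the vertex set of a simplex), and let B ⊆ E be a finite set that is sufficiently rich for S, meaning s − s' ∈ B for every pair of points s, s' ∈ S. Then the distance to the zonotope Z(B) attains its minimum over the simplex convexHull(S) at a vertex: there exists s ∈ S such that infDist(s, Z(B)) ≤ infDist(p, Z(B)) for every p ∈ convexHull(S). -/
open Metric

/-- Auxiliary clamping function used to realize a net flow as a change of
zonotope coefficients. -/
noncomputable def zonDelta (N a a' : ℝ) : ℝ :=
  min (max N 0) (1 - a) - min (max (max (-N) 0 - (1 - a')) 0) a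

lemma zonDelta_bounds {N a a' : ℝ} (ha0 : 0 ≤ a) (ha1 : a ≤ 1) :
    -a ≤ zonDelta N a a' ∧ zonDelta N a a' ≤ 1 - a := by
  unfold zonDelta
  constructor
  · have h1 : (0:ℝ) ≤ min (max N 0) (1 - a) :=
      le_min (le_max_right _ _) (by linarith)
    have h2 : min (max (max (-N) 0 - (1 - a')) 0) a ≤ a := min_le_right _ _
    linarith
  · have h1 : min (max N 0) (1 - a) ≤ 1 - a := min_le_right _ _
    have h2 : (0:ℝ) ≤ min (max (max (-N) 0 - (1 - a')) 0) a :=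
      le_min (le_max_right _ _) ha0
    linarith

set_option maxHeartbeats 2000000 in
lemma zonDelta_sub {N a a' : ℝ} (ha0 : 0 ≤ a) (ha1 : a ≤ 1) (ha0' : 0 ≤ a')
    (ha1' : a' ≤ 1) (h1 : N ≤ 1 - a + a') (h2 : -N ≤ 1 - a' + a) :
    zonDelta N a a' - zonDelta (-N) a' a = N := by
  unfold zonDelta
  rcases le_total N 0 with hN | hN <;>
    simp only [min_def, max_def, neg_neg] <;> split_ifs <;> linarith


/-- Every finite "tournament" has a king (for the reversed reachability). -/
lemma exists_king {α : Type*} [DecidableEq α] (S : Finset α) (hS : S.Nonempty)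
    (R : α → α → Prop) [DecidableRel R]
    (htot : ∀ u ∈ S, ∀ v ∈ S, u ≠ v → R u v ∨ R v u) :
    ∃ s ∈ S, ∀ u ∈ S, u ≠ s →
      R u s ∨ ∃ x ∈ S, x ≠ u ∧ x ≠ s ∧ R u x ∧ R x s := by
  obtain ⟨s, hsS, hmax⟩ :=
    S.exists_max_image (fun v => (S.filter fun x => x ≠ v ∧ R x v).card) hS
  refine ⟨s, hsS, ?_⟩
  intro u huS hus
  by_contra hcon
  push_neg at hcon
  obtain ⟨hnRus, hno⟩ := hcon
  have hRsu : R s u := by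
    rcases htot u huS s hsS hus with h | h
    · exact absurd h hnRus
    · exact h
  have hsub : insert s (S.filter fun x => x ≠ s ∧ R x s) ⊆
      S.filter fun x => x ≠ u ∧ R x u := by
    intro x hx
    rcases Finset.mem_insert.mp hx with rfl | hx
    · exact Finset.mem_filter.mpr ⟨hsS, (Ne.symm hus), hRsu⟩
    · obtain ⟨hxS, hxs, hRxs⟩ := Finset.mem_filter.mp hx
      have hxu : x ≠ u := by
        rintro rfl; exact hnRus hRxs
      have hnRux : ¬ R u x := fun hRux => (hno x hxS hxu hxs hRux) hRxs
      have hRxu : R x u := by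
        rcases htot u huS x hxS (Ne.symm hxu) with h | h
        · exact absurd h hnRux
        · exact h
      exact Finset.mem_filter.mpr ⟨hxS, hxu, hRxu⟩
  have hs_not : s ∉ (S.filter fun x => x ≠ s ∧ R x s) := by
    simp [Finset.mem_filter]
  have hcard := Finset.card_le_card hsub
  rw [Finset.card_insert_of_notMem hs_not] at hcard
  have := hmax u huS
  omega

/-- In an affinely independent set, representations as differences are unique. -/
lemma diff_unique {E : Type*} [AddCommGroup E] [Module ℝ E] {S : Finset E}
    (hindep : AffineIndependent ℝ (fun x : S => (x : E))) {x y x' y' : E}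
    (hx : x ∈ S) (hy : y ∈ S) (hx' : x' ∈ S) (hy' : y' ∈ S)
    (hxy : x ≠ y) (hxy' : x' ≠ y') (h : y - x = y' - x') : x = x' ∧ y = y' := by
  classical
  have hyy' : y = y' := by
    by_contra hyy'
    set w : (S : Set E).Elem → ℝ := fun i =>
      ((if (i : E) = y then 1 else 0) - (if (i : E) = x then 1 else 0)) -
        ((if (i : E) = y' then 1 else 0) - (if (i : E) = x' then 1 else 0)) with hw
    have key : ∀ (a : E) (ha : a ∈ S),
        (∑ i : (S : Set E).Elem, (if (i : E) = a then (1:ℝ) else 0)) = 1 := by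
      intro a ha
      have : ∀ i : (S : Set E).Elem, ((i : E) = a) = (i = ⟨a, ha⟩) := by
        intro i; simp [Subtype.ext_iff]
      simp_rw [this]
      simp
    have keyv : ∀ (a : E) (ha : a ∈ S),
        (∑ i : (S : Set E).Elem, (if (i : E) = a then (1:ℝ) else 0) • (i : E)) = a := by
      intro a ha
      have : ∀ i : (S : Set E).Elem, ((i : E) = a) = (i = ⟨a, ha⟩) := by
        intro i; simp [Subtype.ext_iff]
      simp_rw [this, ite_smul, one_smul, zero_smul]
      rw [Finset.sum_ite_eq' Finset.univ (⟨a, ha⟩ : (S : Set E).Elem)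
        (fun i => (i : E))]
      simp
    have hsum : ∑ i : (S : Set E).Elem, w i = 0 := by
      simp only [hw, Finset.sum_sub_distrib]
      rw [key y hy, key x hx, key y' hy', key x' hx']
      ring
    have hvec : ∑ i : (S : Set E).Elem, w i • (i : E) = 0 := by
      simp only [hw, sub_smul, Finset.sum_sub_distrib]
      rw [keyv y hy, keyv x hx, keyv y' hy', keyv x' hx']
      have : y - x - (y' - x') = 0 := by rw [h]; abel
      linear_combination (norm := abel) this
    have h0 := affineIndependent_iff.mp hindep Finset.univ w hsum hvec
      ⟨y, hy⟩ (Finset.mem_univ _)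
    simp only [hw, if_neg hyy', if_neg (show ¬ y = x from fun hc => hxy hc.symm),
      if_true] at h0
    split_ifs at h0 <;> linarith
  refine ⟨?_, hyy'⟩
  rw [hyy'] at h
  exact sub_right_inj.mp h

/-- **Proposition (minimum at a vertex).** If the finite set `B` is
sufficiently rich for the vertex set `S` of a simplex (it contains all
differences of points of `S`), then the distance to the zonotope `Z(B)`
attains its minimum over the simplex `convexHull ℝ S` at a vertex. -/
theorem zonotope_dist_min_at_vertex
    {E : Type*} [NormedAddCommGroup E] [InnerProductSpace ℝ E]
    (B S : Finset E) (hS : S.Nonempty)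
    (hindep : AffineIndependent ℝ (fun x : S => (x : E)))
    (hrich : ∀ s ∈ S, ∀ s' ∈ S, s - s' ∈ B) :
    ∃ s ∈ S, ∀ p ∈ convexHull ℝ (S : Set E),
      infDist s (zonotope B) ≤ infDist p (zonotope B) := by
  classical
  obtain ⟨s₀, hs₀S, hs₀min⟩ :=
    S.exists_min_image (fun s => infDist s (zonotope B)) hS
  refine ⟨s₀, hs₀S, ?_⟩
  intro p hp
  have hZne : (zonotope B).Nonempty :=
    ⟨∑ b ∈ B, (0:ℝ) • b, ⟨fun _ => 0, fun b _ => ⟨le_refl _, zero_le_one⟩, rfl⟩⟩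
  by_contra hlt
  push_neg at hlt
  obtain ⟨z, hzZ, hzlt⟩ := (infDist_lt_iff hZne).mp hlt
  -- the key claim
  have hmain : ∃ s ∈ S, ∃ z' ∈ zonotope B, dist s z' = dist p z := by
    obtain ⟨c, hc, hzeq⟩ := hzZ
    rw [Finset.convexHull_eq] at hp
    obtain ⟨w, hw0, hw1, hwp⟩ := hp
    rw [Finset.centerMass_eq_of_sum_1 _ _ hw1] at hwp
    simp only [id_eq] at hwp
    -- capacities and the tournament relation
    set A : E → E → ℝ := fun u v => 1 - c (v - u) + c (u - v) with hAdef
    set R : E → E → Prop := fun u v => 1 ≤ A u v with hRdef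
    have htot : ∀ u ∈ S, ∀ v ∈ S, u ≠ v → R u v ∨ R v u := by
      intro u hu v hv _
      have : A u v + A v u = 2 := by simp only [hAdef]; ring
      rcases le_total 1 (A u v) with h | h
      · exact Or.inl h
      · exact Or.inr (by simp only [hRdef]; linarith)
    have hRss : ∀ u, R u u := by
      intro u; simp only [hRdef, hAdef, sub_self, le_refl]
      simp
    have hAnn : ∀ u ∈ S, ∀ v ∈ S, 0 ≤ A u v := by
      intro u hu v hv
      have h1 := hc (v - u) (hrich v hv u hu)
      have h2 := hc (u - v) (hrich u hu v hv)
      simp only [hAdef]; linarith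
    obtain ⟨s, hsS, hking⟩ := exists_king S hS R htot
    have hroute : ∀ u, u ∈ S → u ≠ s → ∃ x, x ∈ S ∧ x ≠ u ∧ R u x ∧ R x s := by
      intro u hu hus
      rcases hking u hu hus with h | ⟨x, hxS, hxu, hxs, h1, h2⟩
      · exact ⟨s, hsS, Ne.symm hus, h, hRss s⟩
      · exact ⟨x, hxS, hxu, h1, h2⟩
    choose! r hrS hrne hr1 hr2 using hroute
    -- the flow
    set F : E → Finset E := fun x => S.filter (fun u => u ≠ s ∧ r u = x) with hFdef
    set g : E → E → ℝ := fun x y =>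
      (if x ∈ S ∧ x ≠ s ∧ r x = y then w x else 0) +
      (if y = s ∧ x ≠ s then ∑ u ∈ F x, w u else 0) with hgdef
    have hg0 : ∀ x y, 0 ≤ g x y := by
      intro x y
      have h1 : (0:ℝ) ≤ if x ∈ S ∧ x ≠ s ∧ r x = y then w x else 0 := by
        split_ifs with h
        · exact hw0 x h.1
        · exact le_refl 0
      have h2 : (0:ℝ) ≤ if y = s ∧ x ≠ s then ∑ u ∈ F x, w u else 0 := by
        split_ifs with h
        · exact Finset.sum_nonneg fun u hu => hw0 u (Finset.mem_filter.mp hu).1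
        · exact le_refl 0
      simp only [hgdef]; positivity
    have hwle : ∀ x ∈ S, w x ≤ 1 := by
      intro x hx
      calc w x ≤ ∑ u ∈ S, w u := Finset.single_le_sum (fun u hu => hw0 u hu) hx
      _ = 1 := hw1
    have hFsub : ∀ x, F x ⊆ S := fun x => Finset.filter_subset _ _
    have hFle : ∀ x, ∑ u ∈ F x, w u ≤ 1 := by
      intro x
      calc ∑ u ∈ F x, w u ≤ ∑ u ∈ S, w u :=
        Finset.sum_le_sum_of_subset_of_nonneg (hFsub x) (fun u hu _ => hw0 u hu)
      _ = 1 := hw1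
    have hgle : ∀ x y, g x y ≤ 1 := by
      intro x y
      by_cases h1 : x ∈ S ∧ x ≠ s ∧ r x = y
      · by_cases h2 : y = s ∧ x ≠ s
        · have hxF : x ∉ F x := by
            simp only [hFdef, Finset.mem_filter]
            rintro ⟨-, -, hrx⟩
            rw [h1.2.2, h2.1] at hrx
            exact h1.2.1 hrx.symm
          have hins : insert x (F x) ⊆ S := by
            intro u hu
            rcases Finset.mem_insert.mp hu with rfl | hu
            · exact h1.1
            · exact hFsub x hu
          have : w x + ∑ u ∈ F x, w u = ∑ u ∈ insert x (F x), w u :=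
            (Finset.sum_insert hxF).symm
          simp only [hgdef, if_pos h1, if_pos h2]
          rw [this]
          calc ∑ u ∈ insert x (F x), w u ≤ ∑ u ∈ S, w u :=
            Finset.sum_le_sum_of_subset_of_nonneg hins (fun u hu _ => hw0 u hu)
          _ = 1 := hw1
        · simp only [hgdef, if_pos h1, if_neg h2, add_zero]
          exact hwle x h1.1
      · by_cases h2 : y = s ∧ x ≠ s
        · simp only [hgdef, if_neg h1, if_pos h2, zero_add]
          exact hFle x
        · simp only [hgdef, if_neg h1, if_neg h2, add_zero]
          exact zero_le_one
    have hgA : ∀ x ∈ S, ∀ y ∈ S, g x y ≠ 0 → R x y := by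
      intro x hx y hy hne
      by_cases h1 : x ∈ S ∧ x ≠ s ∧ r x = y
      · have := hr1 x hx h1.2.1
        rwa [h1.2.2] at this
      · have hval : g x y = if y = s ∧ x ≠ s then ∑ u ∈ F x, w u else 0 := by
          simp only [hgdef, if_neg h1, zero_add]
        rw [hval] at hne
        by_cases h2 : y = s ∧ x ≠ s
        · rw [if_pos h2] at hne
          obtain ⟨u, huF, hwu⟩ := Finset.exists_ne_zero_of_sum_ne_zero hne
          obtain ⟨huS, hus, hru⟩ := Finset.mem_filter.mp huF
          have := hr2 u huS hus
          rw [hru] at this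
          rwa [h2.1]
        · rw [if_neg h2] at hne
          exact absurd rfl hne
    set n : E → E → ℝ := fun x y => g x y - g y x with hndef
    have hnA : ∀ x ∈ S, ∀ y ∈ S, n x y ≤ A x y := by
      intro x hx y hy
      by_cases hgz : g x y = 0
      · have h1 := hg0 y x
        have h2 := hAnn x hx y hy
        simp only [hndef, hgz]
        linarith
      · have hR : (1:ℝ) ≤ A x y := hgA x hx y hy hgz
        have h1 := hg0 y x
        have h2 := hgle x y
        simp only [hndef]
        linarith
    set d : E → E → ℝ := fun x y => zonDelta (n x y) (c (y - x)) (c (x - y)) with hddef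
    set c' : E → ℝ := fun e =>
      c e + ∑ x ∈ S, ∑ y ∈ S, (if x ≠ y ∧ e = y - x then d x y else 0) with hc'def
    have hDb : ∀ b ∈ B,
        -c b ≤ (∑ x ∈ S, ∑ y ∈ S, if x ≠ y ∧ b = y - x then d x y else 0) ∧
        (∑ x ∈ S, ∑ y ∈ S, if x ≠ y ∧ b = y - x then d x y else 0) ≤ 1 - c b := by
      intro b hb
      by_cases hex : ∃ x, x ∈ S ∧ ∃ y, y ∈ S ∧ x ≠ y ∧ b = y - x
      · obtain ⟨x₀, hx₀, y₀, hy₀, hxy₀, hbeq⟩ := hex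
        have hval : (∑ x ∈ S, ∑ y ∈ S, if x ≠ y ∧ b = y - x then d x y else 0)
            = d x₀ y₀ := by
          rw [Finset.sum_eq_single x₀]
          · rw [Finset.sum_eq_single y₀]
            · exact if_pos ⟨hxy₀, hbeq⟩
            · intro y hy hne
              apply if_neg
              rintro ⟨hxy, hbe⟩
              apply hne
              have h' : y - x₀ = y₀ - x₀ := by rw [← hbe, ← hbeq]
              exact sub_left_inj.mp h'
            · intro hy; exact absurd hy₀ hy
          · intro x hx hne
            apply Finset.sum_eq_zero
            intro y hy
            apply if_neg
            rintro ⟨hxy, hbe⟩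
            have heq : y - x = y₀ - x₀ := by rw [← hbe, ← hbeq]
            exact hne (diff_unique hindep hx hy hx₀ hy₀ hxy hxy₀ heq).1
          · intro hx; exact absurd hx₀ hx
        rw [hval]
        have h1 := hc (y₀ - x₀) (hrich y₀ hy₀ x₀ hx₀)
        have hb1 : c b = c (y₀ - x₀) := by rw [hbeq]
        have hbd := zonDelta_bounds (N := n x₀ y₀) (a' := c (x₀ - y₀)) h1.1 h1.2
        simp only [hddef]
        rw [hb1]
        exact hbd
      · push_neg at hex
        have hval : (∑ x ∈ S, ∑ y ∈ S, if x ≠ y ∧ b = y - x then d x y else 0) = 0 := by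
          apply Finset.sum_eq_zero; intro x hx
          apply Finset.sum_eq_zero; intro y hy
          apply if_neg
          rintro ⟨h1, h2⟩
          exact (hex x hx y hy h1) h2
        rw [hval]
        have := hc b hb
        constructor <;> linarith
    -- the displacement sums
    have hTsum : ∑ b ∈ B, (∑ x ∈ S, ∑ y ∈ S, if x ≠ y ∧ b = y - x then d x y else 0) • b
        = ∑ x ∈ S, ∑ y ∈ S, d x y • (y - x) := by
      have hT1 : ∀ b : E, (∑ x ∈ S, ∑ y ∈ S, if x ≠ y ∧ b = y - x then d x y else 0) • b
          = ∑ x ∈ S, ∑ y ∈ S, (if x ≠ y ∧ b = y - x then d x y • b else 0) := by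
        intro b
        rw [Finset.sum_smul]
        refine Finset.sum_congr rfl fun x _ => ?_
        rw [Finset.sum_smul]
        refine Finset.sum_congr rfl fun y _ => ?_
        rw [ite_smul, zero_smul]
      rw [Finset.sum_congr rfl fun b _ => hT1 b]
      rw [Finset.sum_comm]
      refine Finset.sum_congr rfl fun x hx => ?_
      rw [Finset.sum_comm]
      refine Finset.sum_congr rfl fun y hy => ?_
      by_cases hxy : x = y
      · subst hxy
        have : ∀ b ∈ B, (if x ≠ x ∧ b = x - x then d x x • b else 0) = 0 := by
          intro b _; rw [if_neg]; rintro ⟨h, -⟩; exact h rfl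
        rw [Finset.sum_congr rfl this, Finset.sum_const, smul_zero, sub_self, smul_zero]
      · have hcongr : ∀ b ∈ B, (if x ≠ y ∧ b = y - x then d x y • b else 0)
            = (if b = y - x then d x y • b else 0) := by
          intro b _
          by_cases hb : b = y - x <;> simp [hb, hxy]
        rw [Finset.sum_congr rfl hcongr,
          Finset.sum_ite_eq' B (y - x) (fun b => d x y • b), if_pos (hrich y hy x hx)]
    have hdsub : ∀ x ∈ S, ∀ y ∈ S, d x y - d y x = n x y := by
      intro x hx y hy
      by_cases hxy : x = y
      · subst hxy
        simp only [hndef, sub_self]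
      · have hb1 := hc (y - x) (hrich y hy x hx)
        have hb2 := hc (x - y) (hrich x hx y hy)
        have h1 : n x y ≤ 1 - c (y - x) + c (x - y) := by
          have := hnA x hx y hy
          rwa [hAdef] at this
        have h2 : -(n x y) ≤ 1 - c (x - y) + c (y - x) := by
          have h := hnA y hy x hx
          rw [hAdef] at h
          have hneg : n y x = -(n x y) := by simp only [hndef]; ring
          rwa [hneg] at h
        have hz := zonDelta_sub hb1.1 hb1.2 hb2.1 hb2.2 h1 h2
        simp only [hddef]
        have hneg : n y x = -(n x y) := by simp only [hndef]; ring
        rw [hneg]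
        exact hz
    have hG : ∑ x ∈ S, ∑ y ∈ S, g x y • (y - x) = s - p := by
      have hsplitg : ∀ x y : E, g x y • (y - x)
          = (if x ∈ S ∧ x ≠ s ∧ r x = y then w x • (y - x) else 0)
            + (if y = s ∧ x ≠ s then (∑ u ∈ F x, w u) • (y - x) else 0) := by
        intro x y
        simp only [hgdef, add_smul, ite_smul, zero_smul]
      have hstep : ∑ x ∈ S, ∑ y ∈ S, g x y • (y - x)
          = (∑ x ∈ S, ∑ y ∈ S, if x ∈ S ∧ x ≠ s ∧ r x = y then w x • (y - x) else 0)
            + ∑ x ∈ S, ∑ y ∈ S, if y = s ∧ x ≠ s then (∑ u ∈ F x, w u) • (y - x) else 0 := by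
        rw [← Finset.sum_add_distrib]
        refine Finset.sum_congr rfl fun x _ => ?_
        rw [← Finset.sum_add_distrib]
        exact Finset.sum_congr rfl fun y _ => hsplitg x y
      have hG1 : (∑ x ∈ S, ∑ y ∈ S, if x ∈ S ∧ x ≠ s ∧ r x = y then w x • (y - x) else 0)
          = ∑ x ∈ S, (if x ≠ s then w x • (r x - x) else 0) := by
        refine Finset.sum_congr rfl fun x hx => ?_
        by_cases hxs : x = s
        · have : ∀ y ∈ S, (if x ∈ S ∧ x ≠ s ∧ r x = y then w x • (y - x) else 0) = 0 := by
            intro y _; rw [if_neg]; rintro ⟨-, h, -⟩; exact h hxs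
          rw [Finset.sum_congr rfl this, Finset.sum_const, smul_zero, if_neg (by simp [hxs])]
        · have hcongr : ∀ y ∈ S, (if x ∈ S ∧ x ≠ s ∧ r x = y then w x • (y - x) else 0)
              = (if y = r x then w x • (y - x) else 0) := by
            intro y _
            by_cases hy : y = r x
            · rw [if_pos ⟨hx, hxs, hy.symm⟩, if_pos hy]
            · rw [if_neg, if_neg hy]
              rintro ⟨-, -, h⟩; exact hy h.symm
          rw [Finset.sum_congr rfl hcongr,
            Finset.sum_ite_eq' S (r x) (fun y => w x • (y - x)),
            if_pos (hrS x hx hxs), if_pos hxs]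
      have hG2 : (∑ x ∈ S, ∑ y ∈ S, if y = s ∧ x ≠ s then (∑ u ∈ F x, w u) • (y - x) else 0)
          = ∑ x ∈ S, (if x ≠ s then w x • (s - r x) else 0) := by
        have hinner : ∀ x ∈ S, (∑ y ∈ S, if y = s ∧ x ≠ s then (∑ u ∈ F x, w u) • (y - x) else 0)
            = if x ≠ s then ∑ u ∈ S, (if u ≠ s ∧ r u = x then w u • (s - x) else 0) else 0 := by
          intro x _
          by_cases hxs : x = s
          · have : ∀ y ∈ S, (if y = s ∧ x ≠ s then (∑ u ∈ F x, w u) • (y - x) else 0) = 0 := by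
              intro y _; rw [if_neg]; rintro ⟨-, h⟩; exact h hxs
            rw [Finset.sum_congr rfl this, Finset.sum_const, smul_zero, if_neg (by simp [hxs])]
          · have hcongr : ∀ y ∈ S, (if y = s ∧ x ≠ s then (∑ u ∈ F x, w u) • (y - x) else 0)
                = (if y = s then (∑ u ∈ F x, w u) • (y - x) else 0) := by
              intro y _
              by_cases hy : y = s
              · rw [if_pos ⟨hy, hxs⟩, if_pos hy]
              · rw [if_neg (by rintro ⟨h, -⟩; exact hy h), if_neg hy]
            rw [Finset.sum_congr rfl hcongr,
              Finset.sum_ite_eq' S s (fun y => (∑ u ∈ F x, w u) • (y - x)),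
              if_pos hsS, if_pos hxs, Finset.sum_smul, hFdef, Finset.sum_filter]
        rw [Finset.sum_congr rfl hinner]
        have hmerge : ∀ x ∈ S,
            (if x ≠ s then ∑ u ∈ S, (if u ≠ s ∧ r u = x then w u • (s - x) else 0) else 0)
            = ∑ u ∈ S, (if x ≠ s ∧ u ≠ s ∧ r u = x then w u • (s - x) else 0) := by
          intro x _
          by_cases hxs : x = s
          · rw [if_neg (by simp [hxs])]
            have : ∀ u ∈ S, (if x ≠ s ∧ u ≠ s ∧ r u = x then w u • (s - x) else 0) = 0 := by
              intro u _; rw [if_neg]; rintro ⟨h, -⟩; exact h hxs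
            rw [Finset.sum_congr rfl this, Finset.sum_const, smul_zero]
          · rw [if_pos hxs]
            refine Finset.sum_congr rfl fun u _ => ?_
            by_cases hu : u ≠ s ∧ r u = x
            · rw [if_pos hu, if_pos ⟨hxs, hu⟩]
            · rw [if_neg hu, if_neg (by rintro ⟨-, h⟩; exact hu h)]
        rw [Finset.sum_congr rfl hmerge, Finset.sum_comm]
        refine Finset.sum_congr rfl fun u hu => ?_
        by_cases hus : u = s
        · have : ∀ x ∈ S, (if x ≠ s ∧ u ≠ s ∧ r u = x then w u • (s - x) else 0) = 0 := by
            intro x _; rw [if_neg]; rintro ⟨-, h, -⟩; exact h hus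
          rw [Finset.sum_congr rfl this, Finset.sum_const, smul_zero, if_neg (by simp [hus])]
        · rw [if_pos hus]
          by_cases hrs : r u = s
          · have : ∀ x ∈ S, (if x ≠ s ∧ u ≠ s ∧ r u = x then w u • (s - x) else 0) = 0 := by
              intro x _
              rw [if_neg]
              rintro ⟨hxs, -, hrx⟩
              exact hxs (hrx ▸ hrs)
            rw [Finset.sum_congr rfl this, Finset.sum_const, smul_zero, hrs, sub_self,
              smul_zero]
          · have hcongr : ∀ x ∈ S, (if x ≠ s ∧ u ≠ s ∧ r u = x then w u • (s - x) else 0)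
                = (if x = r u then w u • (s - x) else 0) := by
              intro x _
              by_cases hx : x = r u
              · rw [if_pos ⟨by rw [hx]; exact hrs, hus, hx.symm⟩, if_pos hx]
              · rw [if_neg (by rintro ⟨-, -, h⟩; exact hx h.symm), if_neg hx]
            rw [Finset.sum_congr rfl hcongr,
              Finset.sum_ite_eq' S (r u) (fun x => w u • (s - x)),
              if_pos (hrS u hu hus)]
      rw [hstep, hG1, hG2, ← Finset.sum_add_distrib]
      have hfinal : ∀ x ∈ S,
          ((if x ≠ s then w x • (r x - x) else 0) + (if x ≠ s then w x • (s - r x) else 0))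
          = w x • (s - x) := by
        intro x _
        by_cases hxs : x = s
        · rw [if_neg (by simp [hxs]), if_neg (by simp [hxs]), hxs, sub_self, smul_zero,
            add_zero]
        · rw [if_pos hxs, if_pos hxs, ← smul_add]
          congr 1
          abel
      rw [Finset.sum_congr rfl hfinal]
      have : ∑ x ∈ S, w x • (s - x) = (∑ x ∈ S, w x) • s - ∑ x ∈ S, w x • x := by
        rw [Finset.sum_smul, ← Finset.sum_sub_distrib]
        exact Finset.sum_congr rfl fun x _ => by rw [smul_sub]
      rw [this, hw1, one_smul, hwp]
    have hT : ∑ x ∈ S, ∑ y ∈ S, d x y • (y - x) = s - p := by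
      have hswap : (∑ x ∈ S, ∑ y ∈ S, d x y • (y - x))
          = ∑ x ∈ S, ∑ y ∈ S, d y x • (x - y) := Finset.sum_comm
      have hpair : (∑ x ∈ S, ∑ y ∈ S, d x y • (y - x)) + (∑ x ∈ S, ∑ y ∈ S, d x y • (y - x))
          = ∑ x ∈ S, ∑ y ∈ S, n x y • (y - x) := by
        nth_rewrite 2 [hswap]
        rw [← Finset.sum_add_distrib]
        refine Finset.sum_congr rfl fun x hx => ?_
        rw [← Finset.sum_add_distrib]
        refine Finset.sum_congr rfl fun y hy => ?_
        have h1 : (x - y) = -(y - x) := by abel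
        rw [h1, smul_neg, ← sub_eq_add_neg, ← sub_smul, hdsub x hx y hy]
      have hgswap : (∑ x ∈ S, ∑ y ∈ S, g y x • (y - x))
          = -∑ x ∈ S, ∑ y ∈ S, g x y • (y - x) := by
        rw [← Finset.sum_neg_distrib]
        rw [Finset.sum_comm]
        refine Finset.sum_congr rfl fun x _ => ?_
        rw [← Finset.sum_neg_distrib]
        refine Finset.sum_congr rfl fun y _ => ?_
        rw [← smul_neg]
        congr 1
        abel
      have hnsum : (∑ x ∈ S, ∑ y ∈ S, n x y • (y - x)) = (s - p) + (s - p) := by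
        have : ∀ x ∈ S, ∀ y ∈ S, n x y • (y - x) = g x y • (y - x) - g y x • (y - x) := by
          intro x _ y _
          simp only [hndef, sub_smul]
        calc (∑ x ∈ S, ∑ y ∈ S, n x y • (y - x))
            = (∑ x ∈ S, ∑ y ∈ S, (g x y • (y - x) - g y x • (y - x))) := by
              refine Finset.sum_congr rfl fun x hx => ?_
              exact Finset.sum_congr rfl fun y hy => this x hx y hy
          _ = (∑ x ∈ S, ∑ y ∈ S, g x y • (y - x)) - ∑ x ∈ S, ∑ y ∈ S, g y x • (y - x) := by
              rw [← Finset.sum_sub_distrib]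
              exact Finset.sum_congr rfl fun x _ => by rw [← Finset.sum_sub_distrib]
          _ = (s - p) + (s - p) := by rw [hgswap, hG, sub_neg_eq_add]
      have h2 : (2:ℝ) • (∑ x ∈ S, ∑ y ∈ S, d x y • (y - x)) = (2:ℝ) • (s - p) := by
        rw [two_smul, two_smul]
        rw [hpair, hnsum]
      exact smul_right_injective E (by norm_num : (2:ℝ) ≠ 0) h2
    -- conclude
    refine ⟨s, hsS, z + (s - p), ⟨c', ?_, ?_⟩, ?_⟩
    · intro b hb
      have h1 := hDb b hb
      have h2 := hc b hb
      simp only [hc'def]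
      constructor <;> linarith [h1.1, h1.2, h2.1, h2.2]
    · have hsplit : ∑ b ∈ B, c' b • b = (∑ b ∈ B, c b • b)
          + ∑ b ∈ B, (∑ x ∈ S, ∑ y ∈ S, if x ≠ y ∧ b = y - x then d x y else 0) • b := by
        rw [← Finset.sum_add_distrib]
        refine Finset.sum_congr rfl fun b _ => ?_
        simp only [hc'def, add_smul]
      rw [hsplit, hTsum, hT, ← hzeq]
    · rw [dist_eq_norm, dist_eq_norm]
      congr 1
      abel
  obtain ⟨s, hsS, z', hz'Z, hdist⟩ := hmain
  have h1 : infDist s₀ (zonotope B) ≤ dist p z := by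
    calc infDist s₀ (zonotope B) ≤ infDist s (zonotope B) := hs₀min s hsS
    _ ≤ dist s z' := infDist_le_dist_of_mem hz'Z
    _ = dist p z := hdist
  exact absurd hzlt (not_lt.mpr h1)
end

section
/- Let E be a real inner product space, let V ⊆ E be a nonempty finite set, and let B ⊆ E be a finite set containing the difference v − v' for every pair of points v, v' ∈ V. Then there exists v ∈ V such that infDist(v, Z(B)) ≤ infDist(p, Z(B)) for every p ∈ convexHull(V); in particular, if every point of V has distance to Z(B) strictly greater than a given real number h, then every point of convexHull(V) has distance to Z(B) strictly greater than h. -/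
open Metric

section aux
variable {E : Type*} [NormedAddCommGroup E] [InnerProductSpace ℝ E]

lemma zonotope_add_smul_mem (B : Finset E) {d : E} (hd : d ∈ B) (hd' : -d ∈ B)
    (c : E → ℝ) (hc : ∀ b ∈ B, 0 ≤ c b ∧ c b ≤ 1) {s : ℝ} (hs : 0 ≤ s)
    (hroom : s ≤ 1 - c d + c (-d)) :
    (∑ b ∈ B, c b • b) + s • d ∈ zonotope B := by
  classical
  by_cases hd0 : d = 0
  · subst hd0
    simpa using ⟨c, hc, rfl⟩
  have hne : d ≠ -d := by
    intro h
    apply hd0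
    have h2 : d + d = 0 := by rw [← sub_neg_eq_add, ← h, sub_self]
    have : (2 : ℝ) • d = 0 := by rw [two_smul]; exact h2
    simpa using this
  set δ₁ := min s (1 - c d) with hδ₁def
  set δ₂ := s - δ₁ with hδ₂def
  have hcd := hc d hd
  have hcnd := hc (-d) hd'
  have hδ₁0 : 0 ≤ δ₁ := le_min hs (by linarith [hcd.2])
  have hδ₁1 : δ₁ ≤ 1 - c d := min_le_right _ _
  have hδ₂0 : 0 ≤ δ₂ := by
    have := min_le_left s (1 - c d); simp only [hδ₂def]; linarith
  have hδ₂cnd : δ₂ ≤ c (-d) := by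
    rcases min_cases s (1 - c d) with ⟨h1, h2⟩ | ⟨h1, h2⟩ <;>
      simp only [hδ₂def, hδ₁def, h1] <;> linarith
  set c' : E → ℝ := fun x => if x = d then c d + δ₁ else if x = -d then c (-d) - δ₂ else c x
    with hc'def
  refine ⟨c', ?_, ?_⟩
  · intro b hb
    simp only [hc'def]
    split_ifs with h1
    · constructor <;> linarith
    · constructor <;> linarith [hcnd.2]
    · exact hc b hb
  · have key : ∀ b ∈ B, c' b • b = c b • b + (c' b - c b) • b := by
      intro b _; rw [sub_smul]; abel
    rw [Finset.sum_congr rfl key, Finset.sum_add_distrib]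
    have hzero : ∀ b ∈ B, b ∉ ({d, -d} : Finset E) → (c' b - c b) • b = 0 := by
      intro b _ hb
      simp only [Finset.mem_insert, Finset.mem_singleton, not_or] at hb
      simp only [hc'def, if_neg hb.1, if_neg hb.2, sub_self, zero_smul]
    have hsub : ({d, -d} : Finset E) ⊆ B := by
      intro x hx
      simp only [Finset.mem_insert, Finset.mem_singleton] at hx
      rcases hx with rfl | rfl
      · exact hd
      · exact hd'
    rw [← Finset.sum_subset hsub hzero]
    rw [Finset.sum_insert (by simpa using hne), Finset.sum_singleton]
    have e1 : c' d - c d = δ₁ := by simp [hc'def]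
    have e2 : c' (-d) - c (-d) = -δ₂ := by
      simp only [hc'def]
      split_ifs with h1
      · exact absurd h1.symm hne
      · ring
    rw [e1, e2]
    have : δ₁ + δ₂ = s := by simp [hδ₂def]
    rw [← this]
    module

lemma zonotope_swap (B : Finset E) {d : E} (hd : d ∈ B) (hd' : -d ∈ B) {z : E}
    (hz : z ∈ zonotope B) {s r : ℝ} (hs : 0 ≤ s) (hr : 0 ≤ r) (hsr : s + r ≤ 1) :
    z + s • d ∈ zonotope B ∨ z - r • d ∈ zonotope B := by
  obtain ⟨c, hc, rfl⟩ := hz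
  by_cases hroom : s ≤ 1 - c d + c (-d)
  · exact Or.inl (zonotope_add_smul_mem B hd hd' c hc hs hroom)
  · right
    have he : (∑ b ∈ B, c b • b) - r • d = (∑ b ∈ B, c b • b) + r • (-d) := by
      rw [smul_neg, ← sub_eq_add_neg]
    rw [he]
    apply zonotope_add_smul_mem B hd' (by rwa [neg_neg]) c hc hr
    rw [neg_neg]
    have h1 := (hc d hd).2
    have h2 := (hc (-d) hd').1
    push_neg at hroom
    linarith

lemma zonotope_core (B V : Finset E)
    (hrich : ∀ v ∈ V, ∀ v' ∈ V, v - v' ∈ B) :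
    ∀ S : Finset E, S ⊆ V → ∀ t : E → ℝ, (∀ v ∈ S, 0 ≤ t v) →
      (∑ v ∈ S, t v) ≤ 1 → ∀ z ∈ zonotope B, S.Nonempty →
      ∃ v ∈ S, z + ∑ w ∈ S, t w • (v - w) ∈ zonotope B := by
  classical
  intro S
  induction S using Finset.strongInduction with
  | _ S ih =>
    intro hSV t ht htsum z hz hSne
    obtain ⟨a, ha⟩ := hSne
    by_cases hsing : ∀ b ∈ S, b = a
    · refine ⟨a, ha, ?_⟩
      have : ∑ w ∈ S, t w • (a - w) = 0 := by
        apply Finset.sum_eq_zero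
        intro w hw
        rw [hsing w hw]; simp
      rw [this, add_zero]; exact hz
    · push_neg at hsing
      obtain ⟨b, hb, hba⟩ := hsing
      have hab : a ≠ b := fun h => hba h.symm
      have hd : a - b ∈ B := hrich a (hSV ha) b (hSV hb)
      have hd' : -(a - b) ∈ B := by rw [neg_sub]; exact hrich b (hSV hb) a (hSV ha)
      have hta : 0 ≤ t a := ht a ha
      have htb : 0 ≤ t b := ht b hb
      have htab : t b + t a ≤ 1 := by
        have hsub : ({a, b} : Finset E) ⊆ S := by
          intro x hx
          simp only [Finset.mem_insert, Finset.mem_singleton] at hx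
          rcases hx with rfl | rfl
          · exact ha
          · exact hb
        have := Finset.sum_le_sum_of_subset_of_nonneg hsub
          (fun x hx _ => ht x hx)
        rw [Finset.sum_insert (by simpa using hab), Finset.sum_singleton] at this
        linarith
      rcases zonotope_swap B hd hd' hz htb hta htab with hmem | hmem
      · -- merge b into a : S' = S.erase b, t' = update t a (t a + t b)
        set S' := S.erase b with hS'def
        set t' := Function.update t a (t a + t b) with ht'def
        have haS' : a ∈ S' := Finset.mem_erase.2 ⟨hab, ha⟩
        have hSS' : S' ⊂ S := Finset.erase_ssubset hb
        have ht' : ∀ v ∈ S', 0 ≤ t' v := by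
          intro v hv
          rw [ht'def, Function.update_apply]
          split_ifs with h
          · linarith
          · exact ht v (Finset.mem_of_mem_erase hv)
        have hsum' : (∑ v ∈ S', t' v) ≤ 1 := by
          have h1 : ∑ v ∈ S, t v = t a + ∑ v ∈ S.erase a, t v :=
            (Finset.add_sum_erase _ t ha).symm
          have h2 : ∑ v ∈ S.erase a, t v = t b + ∑ v ∈ (S.erase a).erase b, t v :=
            (Finset.add_sum_erase _ t (Finset.mem_erase.2 ⟨hba, hb⟩)).symm
          have e : ∑ v ∈ S', t' v = ∑ v ∈ S, t v := by
            rw [ht'def, Finset.sum_update_of_mem haS', Finset.sdiff_singleton_eq_erase,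
              hS'def, Finset.erase_right_comm, h1, h2]
            ring
          rw [e]; exact htsum
        obtain ⟨v, hv, hvmem⟩ := ih S' hSS' (hSS'.1.trans hSV) t' ht' hsum'
          _ hmem ⟨a, haS'⟩
        refine ⟨v, Finset.mem_of_mem_erase hv, ?_⟩
        have h1 : ∑ w ∈ S, t w • (v - w)
            = t a • (v - a) + ∑ w ∈ S.erase a, t w • (v - w) :=
          (Finset.add_sum_erase _ (fun w => t w • (v - w)) ha).symm
        have h2 : ∑ w ∈ S.erase a, t w • (v - w)
            = t b • (v - b) + ∑ w ∈ (S.erase a).erase b, t w • (v - w) :=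
          (Finset.add_sum_erase _ (fun w => t w • (v - w))
            (Finset.mem_erase.2 ⟨hba, hb⟩)).symm
        have h3 : ∑ w ∈ S', t' w • (v - w)
            = (t a + t b) • (v - a) + ∑ w ∈ (S.erase b).erase a, t w • (v - w) := by
          rw [← Finset.add_sum_erase _ (fun w => t' w • (v - w)) haS']
          congr 1
          · rw [ht'def, Function.update_self]
          · refine Finset.sum_congr rfl fun w hw => ?_
            rw [ht'def, Function.update_apply, if_neg (Finset.ne_of_mem_erase hw)]
        have e : z + ∑ w ∈ S, t w • (v - w)
            = z + t b • (a - b) + ∑ w ∈ S', t' w • (v - w) := by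
          rw [h1, h2, h3, Finset.erase_right_comm]
          module
        rw [e]; exact hvmem
      · -- merge a into b : S' = S.erase a, t' = update t b (t a + t b)
        set S' := S.erase a with hS'def
        set t' := Function.update t b (t a + t b) with ht'def
        have hbS' : b ∈ S' := Finset.mem_erase.2 ⟨hba, hb⟩
        have hSS' : S' ⊂ S := Finset.erase_ssubset ha
        have ht' : ∀ v ∈ S', 0 ≤ t' v := by
          intro v hv
          rw [ht'def, Function.update_apply]
          split_ifs with h
          · linarith
          · exact ht v (Finset.mem_of_mem_erase hv)
        have hsum' : (∑ v ∈ S', t' v) ≤ 1 := by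
          have h1 : ∑ v ∈ S, t v = t b + ∑ v ∈ S.erase b, t v :=
            (Finset.add_sum_erase _ t hb).symm
          have h2 : ∑ v ∈ S.erase b, t v = t a + ∑ v ∈ (S.erase b).erase a, t v :=
            (Finset.add_sum_erase _ t (Finset.mem_erase.2 ⟨hab, ha⟩)).symm
          have e : ∑ v ∈ S', t' v = ∑ v ∈ S, t v := by
            rw [ht'def, Finset.sum_update_of_mem hbS', Finset.sdiff_singleton_eq_erase,
              hS'def, Finset.erase_right_comm, h1, h2]
            ring
          rw [e]; exact htsum
        obtain ⟨v, hv, hvmem⟩ := ih S' hSS' (hSS'.1.trans hSV) t' ht' hsum'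
          _ hmem ⟨b, hbS'⟩
        refine ⟨v, Finset.mem_of_mem_erase hv, ?_⟩
        have h1 : ∑ w ∈ S, t w • (v - w)
            = t b • (v - b) + ∑ w ∈ S.erase b, t w • (v - w) :=
          (Finset.add_sum_erase _ (fun w => t w • (v - w)) hb).symm
        have h2 : ∑ w ∈ S.erase b, t w • (v - w)
            = t a • (v - a) + ∑ w ∈ (S.erase b).erase a, t w • (v - w) :=
          (Finset.add_sum_erase _ (fun w => t w • (v - w))
            (Finset.mem_erase.2 ⟨hab, ha⟩)).symm
        have h3 : ∑ w ∈ S', t' w • (v - w)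
            = (t a + t b) • (v - b) + ∑ w ∈ (S.erase a).erase b, t w • (v - w) := by
          rw [← Finset.add_sum_erase _ (fun w => t' w • (v - w)) hbS']
          congr 1
          · rw [ht'def, Function.update_self]
          · refine Finset.sum_congr rfl fun w hw => ?_
            rw [ht'def, Function.update_apply, if_neg (Finset.ne_of_mem_erase hw)]
        have e : z + ∑ w ∈ S, t w • (v - w)
            = z - t a • (a - b) + ∑ w ∈ S', t' w • (v - w) := by
          rw [h1, h2, h3, Finset.erase_right_comm]
          module
        rw [e]; exact hvmem

lemma zonotope_isCompact (B : Finset E) : IsCompact (zonotope B) := by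
  classical
  have himg : zonotope B =
      (fun c : (↥B) → ℝ => ∑ b : ↥B, c b • (b : E)) ''
        (Set.univ.pi fun _ : ↥B => Set.Icc (0:ℝ) 1) := by
    ext x
    constructor
    · rintro ⟨c, hc, rfl⟩
      refine ⟨fun b => c b, fun b _ => ⟨(hc b b.2).1, (hc b b.2).2⟩, ?_⟩
      rw [← Finset.sum_coe_sort B (fun b => c b • b)]
    · rintro ⟨c, hc, rfl⟩
      refine ⟨fun x => if hx : x ∈ B then c ⟨x, hx⟩ else 0, ?_, ?_⟩
      · intro b hb
        simp only [dif_pos hb]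
        exact ⟨(hc ⟨b, hb⟩ trivial).1, (hc ⟨b, hb⟩ trivial).2⟩
      · rw [← Finset.sum_coe_sort B]
        apply Finset.sum_congr rfl
        intro b _
        simp [b.2]
  rw [himg]
  exact (isCompact_univ_pi fun _ => isCompact_Icc).image
    (continuous_finset_sum _ fun b _ => (continuous_apply b).smul continuous_const)

lemma zonotope_nonempty (B : Finset E) : (zonotope B).Nonempty :=
  ⟨0, 0, fun b _ => by norm_num, by simp⟩

end aux

/-- **Lemma.** If the finite set `B` contains all differences of points of a
nonempty finite set `V`, then the distance to the zonotope `Z(B)` attains its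
minimum over `convexHull ℝ V` at a point of `V`; in particular, if every point
of `V` is at distance `> h` from `Z(B)`, then so is every point of the convex
hull of `V`. -/
theorem zonotope_dist_min_at_point_of_set
    {E : Type*} [NormedAddCommGroup E] [InnerProductSpace ℝ E]
    (B V : Finset E) (hV : V.Nonempty)
    (hrich : ∀ v ∈ V, ∀ v' ∈ V, v - v' ∈ B) :
    (∃ v ∈ V, ∀ p ∈ convexHull ℝ (V : Set E),
      infDist v (zonotope B) ≤ infDist p (zonotope B)) ∧
    ∀ h : ℝ, (∀ v ∈ V, h < infDist v (zonotope B)) →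
      ∀ p ∈ convexHull ℝ (V : Set E), h < infDist p (zonotope B) := by
  classical
  obtain ⟨v₀, hv₀V, hv₀min⟩ := V.exists_min_image (fun v => infDist v (zonotope B)) hV
  have key : ∀ p ∈ convexHull ℝ (V : Set E),
      infDist v₀ (zonotope B) ≤ infDist p (zonotope B) := by
    intro p hp
    rw [Finset.convexHull_eq] at hp
    obtain ⟨t, ht0, htsum, hcm⟩ := hp
    have hpe : ∑ w ∈ V, t w • w = p := by
      rw [← hcm, Finset.centerMass_eq_of_sum_1 _ _ htsum]
      simp
    obtain ⟨z, hzZ, hzd⟩ := (zonotope_isCompact B).exists_infDist_eq_dist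
      (zonotope_nonempty B) p
    obtain ⟨v, hvV, hvmem⟩ := zonotope_core B V hrich V le_rfl t ht0 htsum.le
      z hzZ hV
    have hsum : ∑ w ∈ V, t w • (v - w) = v - p := by
      have : ∑ w ∈ V, t w • (v - w) = (∑ w ∈ V, t w) • v - ∑ w ∈ V, t w • w := by
        rw [Finset.sum_smul, ← Finset.sum_sub_distrib]
        exact Finset.sum_congr rfl fun w _ => by rw [smul_sub]
      rw [this, htsum, hpe, one_smul]
    rw [hsum] at hvmem
    have hdist : infDist v (zonotope B) ≤ dist p z := by
      have := infDist_le_dist_of_mem (x := v) hvmem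
      have he : dist v (z + (v - p)) = dist p z := by
        rw [dist_eq_norm, dist_eq_norm]
        congr 1
        abel
      rwa [he] at this
    calc infDist v₀ (zonotope B) ≤ infDist v (zonotope B) := hv₀min v hvV
      _ ≤ dist p z := hdist
      _ = infDist p (zonotope B) := hzd.symm
  refine ⟨⟨v₀, hv₀V, key⟩, fun h hh p hp => lt_of_lt_of_le (hh v₀ hv₀V) (key p hp)⟩
end

section
/- Let E be a finite-dimensional real inner product space, let K ⊆ E be a compact convex set with nonempty interior, and let U ⊆ E be an open convex set with K ∩ U ≠ ∅. Then (frontier K) ∖ U is a strong deformation retract of K ∖ U: there exists a continuous map H : (K ∖ U) × [0,1] → K ∖ U such that H(x,0) = x for all x ∈ K ∖ U, H(x,1) ∈ (frontier K) ∖ U for all x ∈ K ∖ U, and H(x,t) = x for all t ∈ [0,1] whenever x ∈ (frontier K) ∖ U. (The retraction is given by geodesic projection away from a point of U lying in the interior of K.) -/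
open Set Bornology Pointwise


/-- **Observation (deformation retraction).** Let `K` be a compact convex set
with nonempty interior in a finite-dimensional real inner product space and
let `U` be an open convex set meeting `K`. Then `(frontier K) \ U` is a strong
deformation retract of `K \ U`. -/
theorem convex_compl_open_convex_deformation_retract
    {E : Type*} [NormedAddCommGroup E] [InnerProductSpace ℝ E]
    [FiniteDimensional ℝ E]
    (K U : Set E) (hKcomp : IsCompact K) (hKconv : Convex ℝ K)
    (hKint : (interior K).Nonempty)
    (hUopen : IsOpen U) (hUconv : Convex ℝ U) (hKU : (K ∩ U).Nonempty) :
    ∃ H : C(↥(K \ U) × ↥(Set.Icc (0 : ℝ) 1), ↥(K \ U)),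
      (∀ x : ↥(K \ U), H (x, ⟨0, by norm_num⟩) = x) ∧
      (∀ x : ↥(K \ U), ((H (x, ⟨1, by norm_num⟩) : ↥(K \ U)) : E) ∈ frontier K \ U) ∧
      (∀ (x : ↥(K \ U)) (t : ↥(Set.Icc (0 : ℝ) 1)),
        (x : E) ∈ frontier K \ U → H (x, t) = x) := by
  classical
  -- Step 1: find c ∈ interior K ∩ U
  obtain ⟨u, huK, huU⟩ := hKU
  obtain ⟨x₀, hx₀⟩ := hKint
  obtain ⟨c, hcK, hcU⟩ : ∃ c, c ∈ interior K ∧ c ∈ U := by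
    have hcont : Continuous (fun t : ℝ => (1 - t) • x₀ + t • u) := by continuity
    have hnhds : ∀ᶠ t in nhds (1:ℝ), (1 - t) • x₀ + t • u ∈ U :=
      (hcont.continuousAt (x := (1:ℝ))).preimage_mem_nhds
        (by simpa using hUopen.mem_nhds huU)
    obtain ⟨t, htU, ht0, ht1⟩ : ∃ t : ℝ, ((1 - t) • x₀ + t • u ∈ U) ∧ 0 < t ∧ t < 1 := by
      have : ∀ᶠ t in nhdsWithin (1:ℝ) (Iio 1),
          ((1 - t) • x₀ + t • u ∈ U) ∧ 0 < t ∧ t < 1 := by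
        refine ((hnhds.filter_mono nhdsWithin_le_nhds).and ?_)
        filter_upwards [Ioo_mem_nhdsLT_of_mem (by norm_num : (1:ℝ) ∈ Ioc (0:ℝ) 1)] with t ht
        exact ⟨ht.1, ht.2⟩
      exact this.exists
    exact ⟨_, hKconv.combo_interior_self_mem_interior hx₀ huK (by linarith) ht0.le (by ring),
      htU⟩
  -- Step 2: translated set and gauge
  set S : Set E := (-c) +ᵥ K with hS
  have hmem : ∀ {A : Set E} (x : E), x - c ∈ (-c) +ᵥ A ↔ x ∈ A := by
    intro A x
    rw [Set.mem_vadd_set_iff_neg_vadd_mem]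
    simp [sub_eq_neg_add]
  have hSconv : Convex ℝ S := hKconv.vadd _
  have hScomp : IsCompact S := by
    rw [hS, ← Set.image_vadd]; exact hKcomp.image (continuous_const_vadd _)
  have hS0 : S ∈ nhds (0:E) := by
    rw [← mem_interior_iff_mem_nhds, hS, interior_vadd]
    have := (hmem (A := interior K) c).mpr hcK
    simpa using this
  have hSb : IsVonNBounded ℝ S := NormedSpace.isVonNBounded_iff ℝ |>.mpr hScomp.isBounded
  set g : E → ℝ := fun x => gauge S (x - c) with hg
  have hg_cont : Continuous g := (continuous_gauge hSconv hS0).comp (continuous_id.sub continuous_const)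
  have hg_mem : ∀ x : E, g x ≤ 1 ↔ x ∈ K := by
    intro x
    rw [hg, gauge_le_one_iff_mem_closure hSconv hS0, hScomp.isClosed.closure_eq, hmem]
  have hg_front : ∀ x : E, g x = 1 ↔ x ∈ frontier K := by
    intro x
    rw [hg, gauge_eq_one_iff_mem_frontier hSconv hS0]
    constructor
    · rintro ⟨h1, h2⟩
      refine ⟨?_, fun h => h2 ?_⟩
      · rw [← hmem (A := closure K) x, hS, ← closure_vadd] at *; exact h1
      · rw [hS, interior_vadd, hmem]; exact h
    · rintro ⟨h1, h2⟩
      refine ⟨?_, fun h => h2 ?_⟩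
      · rw [hS, closure_vadd, hmem]; exact h1
      · rw [hS, interior_vadd, hmem] at h; exact h
  have hg_pos : ∀ x : E, x ∈ K \ U → 0 < g x := by
    intro x hx
    refine (gauge_pos (absorbent_nhds_zero hS0) hSb).mpr (sub_ne_zero.mpr ?_)
    rintro rfl; exact hx.2 hcU
  have hg_le : ∀ x : E, x ∈ K \ U → g x ≤ 1 := fun x hx => (hg_mem x).mpr hx.1
  -- the homotopy formula
  set σ : E → ℝ → ℝ := fun x t => (1 - t) + t / g x with hσ
  set f : E → ℝ → E := fun x t => c + σ x t • (x - c) with hf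
  have hσ_one : ∀ x t, 0 ≤ t → t ≤ 1 → x ∈ K \ U → 1 ≤ σ x t := by
    intro x t ht0 ht1 hx
    have h1 := hg_pos x hx
    have h2 := hg_le x hx
    have : t ≤ t / g x := by
      rw [le_div_iff₀ h1]; nlinarith
    simp only [hσ]; linarith
  have hgf : ∀ x t, 0 ≤ t → t ≤ 1 → x ∈ K \ U → g (f x t) = (1 - t) * g x + t := by
    intro x t ht0 ht1 hx
    have h1 := hg_pos x hx
    have hσ0 : 0 ≤ σ x t := le_trans zero_le_one (hσ_one x t ht0 ht1 hx)
    simp only [hf, hg]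
    rw [add_sub_cancel_left, gauge_smul_of_nonneg hσ0]
    simp only [smul_eq_mul, hσ]
    field_simp
    simp only [hg]
    ring
  have hfU : ∀ x t, 0 ≤ t → t ≤ 1 → x ∈ K \ U → f x t ∉ U := by
    intro x t ht0 ht1 hx hfU
    have hσ1 := hσ_one x t ht0 ht1 hx
    have hσpos : 0 < σ x t := lt_of_lt_of_le zero_lt_one hσ1
    have hinv1 : (σ x t)⁻¹ ≤ 1 := by
      rw [inv_le_one_iff₀]; right; exact hσ1
    have hx_eq : (1 - (σ x t)⁻¹) • c + (σ x t)⁻¹ • f x t = x := by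
      simp only [hf, smul_add, smul_smul, inv_mul_cancel₀ hσpos.ne']
      module
    have : x ∈ U := by
      rw [← hx_eq]
      exact hUconv hcU hfU (by linarith) (by positivity) (by ring)
    exact hx.2 this
  have hfK : ∀ x t, 0 ≤ t → t ≤ 1 → x ∈ K \ U → f x t ∈ K \ U := by
    intro x t ht0 ht1 hx
    refine ⟨(hg_mem _).mp ?_, hfU x t ht0 ht1 hx⟩
    rw [hgf x t ht0 ht1 hx]
    have := hg_le x hx
    nlinarith
  have hf_front : ∀ x, x ∈ K \ U → x ∈ frontier K → ∀ t, f x t = x := by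
    intro x hx hxf t
    have h1 : g x = 1 := (hg_front x).mpr hxf
    simp only [hf, hσ, h1, div_one]
    module
  -- continuity
  have hFcont : Continuous (fun p : ↥(K \ U) × ↥(Set.Icc (0:ℝ) 1) =>
      f (p.1 : E) (p.2 : ℝ)) := by
    simp only [hf, hσ]
    have h1 : Continuous (fun p : ↥(K \ U) × ↥(Set.Icc (0:ℝ) 1) => (p.1 : E)) :=
      continuous_subtype_val.comp continuous_fst
    have h2 : Continuous (fun p : ↥(K \ U) × ↥(Set.Icc (0:ℝ) 1) => (p.2 : ℝ)) :=
      continuous_subtype_val.comp continuous_snd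
    refine continuous_const.add (Continuous.smul ?_ (h1.sub continuous_const))
    refine ((continuous_const.sub h2).add (h2.div (hg_cont.comp h1) ?_))
    intro p
    exact (hg_pos _ p.1.2).ne'
  refine ⟨⟨fun p => ⟨f (p.1 : E) (p.2 : ℝ), hfK _ _ p.2.2.1 p.2.2.2 p.1.2⟩,
    hFcont.subtype_mk _⟩, ?_, ?_, ?_⟩
  · intro x
    apply Subtype.ext
    simp only [ContinuousMap.coe_mk, hf, hσ]
    norm_num
  · intro x
    simp only [ContinuousMap.coe_mk]
    constructor
    · apply (hg_front _).mp
      rw [hgf _ _ zero_le_one le_rfl x.2]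
      ring
    · exact hfU _ _ zero_le_one le_rfl x.2
  · intro x t hxf
    apply Subtype.ext
    simpa using hf_front _ x.2 hxf.1 t
end
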